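/- arXiv:2003.02058 — 2 statements merged into one kernel-verified Lean document; each statement's English description precedes it below -/
import Mathlib

section
/- Let (∂ : I → H, i) be a Hopf algebra projection over a field k, with kernel generator maps f, g : I → I, and set B = RKer(∂). Then: (i) f and g take all their values in B; (ii) f restricted to B is the identity, so f ∘ f = f; (iii) f(v · i(x)) = ε(x) f(v) and f(i(x) · v) = i(x) ▷_ad f(v) for all v ∈ I, x ∈ H; (iv) g ∘ f = g. -/
open TensorProduct

/-- `RKer(Ω) = {v ∈ I : Σ v' ⊗ Ω(v'') = v ⊗ 1}`. -/
def RKer (k : Type*) {I H : Type*} [CommSemiring k] [Semiring I] [Semiring H]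
    [HopfAlgebra k I] [HopfAlgebra k H] (Ω : I →ₐc[k] H) : Set I :=
  {v : I |
    TensorProduct.map (LinearMap.id : I →ₗ[k] I) Ω.toLinearMap (Coalgebra.comul (R := k) v)
      = v ⊗ₜ[k] (1 : H)}

/-- The left adjoint action of a Hopf algebra on itself:
`adT (a ⊗ b) = Σ a' b S(a'')`. -/
noncomputable def adT (k A : Type*) [CommSemiring k] [Semiring A] [HopfAlgebra k A] :
    A ⊗[k] A →ₗ[k] A :=
  (LinearMap.mul' k A)
    ∘ₗ (TensorProduct.map LinearMap.id (LinearMap.mul' k A))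
    ∘ₗ (TensorProduct.map LinearMap.id
          (TensorProduct.map LinearMap.id (HopfAlgebra.antipode (R := k))))
    ∘ₗ (TensorProduct.map LinearMap.id (TensorProduct.comm k A A).toLinearMap)
    ∘ₗ (TensorProduct.assoc k A A A).toLinearMap
    ∘ₗ (TensorProduct.map (Coalgebra.comul (R := k)) LinearMap.id)

/-- The kernel generator map `f(v) = Σ v' · i(∂(S(v'')))`. -/
noncomputable def fker {k I H : Type*} [Field k] [Ring I] [Ring H]
    [HopfAlgebra k I] [HopfAlgebra k H] (p : I →ₐc[k] H) (i : H →ₐc[k] I) : I →ₗ[k] I :=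
  (LinearMap.mul' k I)
    ∘ₗ (TensorProduct.map LinearMap.id
          (i.toLinearMap ∘ₗ p.toLinearMap ∘ₗ HopfAlgebra.antipode (R := k)))
    ∘ₗ (Coalgebra.comul (R := k))

/-- The kernel generator map `g(v) = Σ i(∂(v')) · S(v'')`. -/
noncomputable def gker {k I H : Type*} [Field k] [Ring I] [Ring H]
    [HopfAlgebra k I] [HopfAlgebra k H] (p : I →ₐc[k] H) (i : H →ₐc[k] I) : I →ₗ[k] I :=
  (LinearMap.mul' k I)
    ∘ₗ (TensorProduct.map (i.toLinearMap ∘ₗ p.toLinearMap) (HopfAlgebra.antipode (R := k)))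
    ∘ₗ (Coalgebra.comul (R := k))

/-!
In the convolution monoid of linear endomorphisms of `I`, the identity has inverse `S` and the
idempotent `e = i ∘ ∂` has inverse `e ∘ S`, so `f = id * e⁻¹` and `g = e * id⁻¹`. The coaction
`Φ v = Σ v' ⊗ ∂(v'')` is multiplicative, and for `a ∈ {id, e}` it factors as
`Φ ∘ a = (a ⊗ 1) * (1 ⊗ ∂)` because `∂ ∘ e = ∂`; the common right factor cancels in
`Φ ∘ (a * b⁻¹)`, which gives `Φ ∘ f = f ⊗ 1` and `Φ ∘ g = g ⊗ 1`, i.e. (i). Everything else is a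
Sweedler computation: since `S` is anti-multiplicative, `f(ab) = Σ a' f(b) e(S a'')` and
`g(ab) = Σ e(a') g(b) S(a'')`, while `f` and `g` both send `i(x)` to `ε(x)`.
-/

open Coalgebra HopfAlgebra WithConv

namespace BialgHom

variable {R A B : Type*} [CommSemiring R] [Semiring A] [Semiring B]
  [HopfAlgebra R A] [HopfAlgebra R B]

lemma comp_antipode (F : A →ₐc[R] B) :
    F.toLinearMap ∘ₗ antipode R = antipode R ∘ₗ F.toLinearMap := by
  have hl : toConv (F.toLinearMap ∘ₗ antipode R) * toConv F.toLinearMap = 1 := by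
    have := LinearMap.algHom_comp_convMul_distrib (F : A →ₐ[R] B) (toConv (antipode R)) (toConv .id)
    rw [LinearMap.antipode_mul_id, LinearMap.algHom_comp_convOne] at this
    exact ofConv_injective this.symm
  have hr : toConv F.toLinearMap * toConv (antipode R ∘ₗ F.toLinearMap) = 1 := by
    have := LinearMap.convMul_comp_coalgHom_distrib (toConv .id) (toConv (antipode R)) F.toCoalgHom
    rw [LinearMap.id_mul_antipode, LinearMap.convOne_comp_coalgHom] at this
    exact ofConv_injective this.symm
  exact congrArg ofConv (left_inv_eq_right_inv hl hr)

lemma map_antipode (F : A →ₐc[R] B) (a : A) : F (antipode R a) = antipode R (F a) :=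
  LinearMap.congr_fun F.comp_antipode a

end BialgHom

theorem MonoidHom.map_mul_inv_eq_of_map_eq_mul {M N : Type*} [Monoid M] [Monoid N]
    (Φ J : M →* N) (c : N) {a : M} {b : Mˣ} (ha : Φ a = J a * c) (hb : Φ b = J b * c) :
    Φ (a * ↑b⁻¹) = J (a * ↑b⁻¹) := by
  have hc : c * Φ ↑b⁻¹ = J ↑b⁻¹ :=
    calc c * Φ ↑b⁻¹ = J ↑b⁻¹ * (J b * c) * Φ ↑b⁻¹ := by
          rw [← mul_assoc, ← map_mul, Units.inv_mul, map_one, one_mul]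
      _ = J ↑b⁻¹ := by rw [← hb, mul_assoc, ← map_mul, Units.mul_inv, map_one, mul_one]
  rw [map_mul, map_mul, ha, mul_assoc, hc]

namespace AlgHom

variable {R C A B : Type*} [CommSemiring R] [AddCommMonoid C] [Module R C] [Coalgebra R C]
  [Semiring A] [Algebra R A] [Semiring B] [Algebra R B]

def compLeftConv (h : A →ₐ[R] B) : WithConv (C →ₗ[R] A) →* WithConv (C →ₗ[R] B) where
  toFun f := toConv (h.toLinearMap ∘ₗ f.ofConv)
  map_one' := by ext; simp
  map_mul' f g := congrArg toConv (LinearMap.algHom_comp_convMul_distrib h f g)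

@[simp] lemma compLeftConv_apply (h : A →ₐ[R] B) (f : WithConv (C →ₗ[R] A)) :
    h.compLeftConv f = toConv (h.toLinearMap ∘ₗ f.ofConv) := rfl

end AlgHom

def HopfAlgebra.idConvUnit (R A : Type*) [CommSemiring R] [Semiring A] [HopfAlgebra R A] :
    (WithConv (A →ₗ[R] A))ˣ where
  val := toConv .id
  inv := toConv (antipode R)
  val_inv := LinearMap.id_mul_antipode
  inv_val := LinearMap.antipode_mul_id

lemma adT_tmul {k A : Type*} [CommSemiring k] [Semiring A] [HopfAlgebra k A] {a : A} {ι : Type*}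
    (r : Repr k a ι) (b : A) :
    adT k A (a ⊗ₜ b) = ∑ j ∈ r.index, r.left j * b * antipode k (r.right j) := by
  simp [adT, ← r.eq, TensorProduct.sum_tmul, mul_assoc]

open Algebra.TensorProduct (includeLeft includeRight)

section RightCoaction

variable {k I H : Type*} [CommSemiring k] [Semiring I] [Semiring H]
  [HopfAlgebra k I] [HopfAlgebra k H] (p : I →ₐc[k] H)

/-- `RKer k p` is the equalizer of `rightCoaction p` and `includeLeft`. -/
noncomputable def rightCoaction : I →ₐ[k] I ⊗[k] H :=
  (Algebra.TensorProduct.map (AlgHom.id k I) (p : I →ₐ[k] H)).comp (Bialgebra.comulAlgHom k I)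

lemma rightCoaction_toLinearMap :
    (rightCoaction p).toLinearMap =
      TensorProduct.map (LinearMap.id : I →ₗ[k] I) p.toLinearMap ∘ₗ comul (R := k) :=
  rfl

lemma compLeftConv_rightCoaction (a : I →ₗc[k] I) (hpa : ∀ v, p (a v) = p v) :
    (rightCoaction p).compLeftConv (toConv a.toLinearMap) =
      (includeLeft : I →ₐ[k] I ⊗[k] H).compLeftConv (toConv a.toLinearMap) *
        toConv ((includeRight : H →ₐ[k] I ⊗[k] H).toLinearMap ∘ₗ p.toLinearMap) := by
  ext v
  rw [(ℛ k v).convMul_apply]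
  simp [rightCoaction_toLinearMap, ← (ℛ k v).induced a |>.eq, BialgHom.toCoalgHom_apply, hpa]

end RightCoaction

section KernelGenerators

variable {k I H : Type*} [Field k] [Ring I] [Ring H] [HopfAlgebra k I] [HopfAlgebra k H]
  (p : I →ₐc[k] H) (i : H →ₐc[k] I)

noncomputable def projConvUnit : (WithConv (I →ₗ[k] I))ˣ :=
  Units.map ((i : H →ₐ[k] I).comp (p : I →ₐ[k] H)).compLeftConv (idConvUnit k I)

lemma toConv_fker : toConv (fker p i) = ↑(idConvUnit k I) * ↑(projConvUnit p i)⁻¹ := rfl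

lemma toConv_gker : toConv (gker p i) = ↑(projConvUnit p i) * ↑(idConvUnit k I)⁻¹ := rfl

lemma compLeftConv_rightCoaction_idConvUnit :
    (rightCoaction p).compLeftConv ↑(idConvUnit k I) =
      (includeLeft : I →ₐ[k] I ⊗[k] H).compLeftConv ↑(idConvUnit k I) *
        toConv ((includeRight : H →ₐ[k] I ⊗[k] H).toLinearMap ∘ₗ p.toLinearMap) :=
  compLeftConv_rightCoaction p (CoalgHom.id k I) fun _ => rfl

lemma compLeftConv_rightCoaction_projConvUnit (hpi : ∀ x, p (i x) = x) :
    (rightCoaction p).compLeftConv ↑(projConvUnit p i) =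
      (includeLeft : I →ₐ[k] I ⊗[k] H).compLeftConv ↑(projConvUnit p i) *
        toConv ((includeRight : H →ₐ[k] I ⊗[k] H).toLinearMap ∘ₗ p.toLinearMap) :=
  compLeftConv_rightCoaction p (i.comp p) fun v => hpi (p v)

lemma fker_mem_RKer (hpi : ∀ x, p (i x) = x) (v : I) : fker p i v ∈ RKer k p := by
  have h := MonoidHom.map_mul_inv_eq_of_map_eq_mul _ _ _
    (compLeftConv_rightCoaction_idConvUnit p) (compLeftConv_rightCoaction_projConvUnit p i hpi)
  rw [← toConv_fker] at h
  exact LinearMap.congr_fun (congrArg ofConv h) v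

lemma gker_mem_RKer (hpi : ∀ x, p (i x) = x) (v : I) : gker p i v ∈ RKer k p := by
  have h := MonoidHom.map_mul_inv_eq_of_map_eq_mul _ _ _
    (compLeftConv_rightCoaction_projConvUnit p i hpi) (compLeftConv_rightCoaction_idConvUnit p)
  rw [← toConv_gker] at h
  exact LinearMap.congr_fun (congrArg ofConv h) v

lemma fker_eq_self_of_mem_RKer {v : I} (hv : v ∈ RKer k p) : fker p i v = v := by
  have hfactor : TensorProduct.map LinearMap.id (i.toLinearMap ∘ₗ p.toLinearMap ∘ₗ antipode k) =
      TensorProduct.map LinearMap.id (i.toLinearMap ∘ₗ antipode k) ∘ₗ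
        TensorProduct.map (LinearMap.id : I →ₗ[k] I) p.toLinearMap := by
    rw [← TensorProduct.map_comp, LinearMap.id_comp, p.comp_antipode, LinearMap.comp_assoc]
  calc fker p i v
      = LinearMap.mul' k I (TensorProduct.map LinearMap.id
          (i.toLinearMap ∘ₗ p.toLinearMap ∘ₗ antipode k) (comul v)) := rfl
    _ = LinearMap.mul' k I (TensorProduct.map LinearMap.id (i.toLinearMap ∘ₗ antipode k)
          (TensorProduct.map LinearMap.id p.toLinearMap (comul v))) := by rw [hfactor]; rfl
    _ = v := by rw [hv.out]; simp [BialgHom.toCoalgHom_apply]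

lemma fker_apply {v : I} {ι : Type*} (r : Repr k v ι) :
    fker p i v = ∑ j ∈ r.index, r.left j * i (p (antipode k (r.right j))) :=
  r.convMul_apply (toConv .id) (toConv (i.toLinearMap ∘ₗ p.toLinearMap ∘ₗ antipode k))

lemma gker_apply {v : I} {ι : Type*} (r : Repr k v ι) :
    gker p i v = ∑ j ∈ r.index, i (p (r.left j)) * antipode k (r.right j) :=
  r.convMul_apply (toConv (i.toLinearMap ∘ₗ p.toLinearMap)) (toConv (antipode k))

lemma fker_mul {a : I} {ι : Type*} (r : Repr k a ι) (b : I) :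
    fker p i (a * b) = ∑ j ∈ r.index, r.left j * fker p i b * i (p (antipode k (r.right j))) := by
  rw [fker_apply p i (r.mul (ℛ k b)), fker_apply p i (ℛ k b)]
  simp [Finset.sum_product, antipode_mul_antidistrib, Finset.mul_sum, Finset.sum_mul, mul_assoc]

lemma gker_mul {a : I} {ι : Type*} (r : Repr k a ι) (b : I) :
    gker p i (a * b) = ∑ j ∈ r.index, i (p (r.left j)) * gker p i b * antipode k (r.right j) := by
  rw [gker_apply p i (r.mul (ℛ k b)), gker_apply p i (ℛ k b)]
  simp [Finset.sum_product, antipode_mul_antidistrib, Finset.mul_sum, Finset.sum_mul, mul_assoc]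

variable {p i} (hpi : ∀ x, p (i x) = x)
include hpi

lemma antipode_map_section (x : H) : i (p (antipode k (i x))) = antipode k (i x) := by
  rw [← i.map_antipode, hpi]

lemma fker_map_section (x : H) : fker p i (i x) = algebraMap k I (counit (R := k) x) := by
  rw [fker_apply p i ((ℛ k x).induced i)]
  simp [hpi, ← i.map_antipode, ← map_mul, ← map_sum, sum_mul_antipode_eq_algebraMap_counit,
    AlgHomClass.commutes]

lemma gker_map_section (x : H) : gker p i (i x) = algebraMap k I (counit (R := k) x) := by
  rw [gker_apply p i ((ℛ k x).induced i)]
  simp [hpi, ← i.map_antipode, ← map_mul, ← map_sum, sum_mul_antipode_eq_algebraMap_counit,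
    AlgHomClass.commutes]

lemma fker_mul_map_section (v : I) (x : H) :
    fker p i (v * i x) = counit (R := k) x • fker p i v := by
  rw [fker_mul p i (ℛ k v), fker_map_section hpi, fker_apply p i (ℛ k v), Finset.smul_sum]
  simp [Algebra.commutes, Algebra.smul_def, mul_assoc]

lemma gker_mul_map_section (v : I) (x : H) :
    gker p i (v * i x) = counit (R := k) x • gker p i v := by
  rw [gker_mul p i (ℛ k v), gker_map_section hpi, gker_apply p i (ℛ k v), Finset.smul_sum]
  simp [Algebra.commutes, Algebra.smul_def, mul_assoc]

lemma fker_map_section_mul (v : I) (x : H) :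
    fker p i (i x * v) = adT k I (i x ⊗ₜ fker p i v) := by
  rw [fker_mul p i ((ℛ k x).induced i), adT_tmul ((ℛ k x).induced i)]
  simp [antipode_map_section hpi]

lemma gker_comp_fker (v : I) : gker p i (fker p i v) = gker p i v := by
  have h := congrArg (TensorProduct.rid k I) (sum_map_tmul_counit_eq (gker p i) v (repr := ℛ k v))
  simp only [map_sum, TensorProduct.rid_tmul, one_smul] at h
  rw [fker_apply p i (ℛ k v), map_sum]
  simpa only [gker_mul_map_section hpi, CoalgHomClass.counit_comp_apply, counit_antipode] using h

end KernelGenerators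

/-- for a Hopf algebra projection `(∂ : I → H, i)` with kernel generator
maps `f, g` and `B = RKer(∂)`:
(i) `f` and `g` take values in `B`;
(ii) `f` restricted to `B` is the identity, so `f ∘ f = f`;
(iii) `f(v · i(x)) = ε(x) f(v)` and `f(i(x) · v) = i(x) ▷_ad f(v)`;
(iv) `g ∘ f = g`. -/
theorem kernel_generator_properties {k I H : Type*} [Field k] [Ring I] [Ring H]
    [HopfAlgebra k I] [HopfAlgebra k H]
    (p : I →ₐc[k] H) (i : H →ₐc[k] I) (hpi : ∀ x : H, p (i x) = x) :
    (∀ v : I, fker p i v ∈ RKer k p ∧ gker p i v ∈ RKer k p) ∧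
    (∀ v : I, v ∈ RKer k p → fker p i v = v) ∧
    (∀ v : I, fker p i (fker p i v) = fker p i v) ∧
    (∀ (v : I) (x : H),
      fker p i (v * i x) = (Coalgebra.counit (R := k) x) • fker p i v) ∧
    (∀ (v : I) (x : H),
      fker p i (i x * v) = adT k I ((i x) ⊗ₜ[k] (fker p i v))) ∧
    (∀ v : I, gker p i (fker p i v) = gker p i v) :=
  ⟨fun v => ⟨fker_mem_RKer p i hpi v, gker_mem_RKer p i hpi v⟩,
    fun _ hv => fker_eq_self_of_mem_RKer p i hv,
    fun v => fker_eq_self_of_mem_RKer p i (fker_mem_RKer p i hpi v),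
    fker_mul_map_section hpi,
    fker_map_section_mul hpi,
    gker_comp_fker hpi⟩
end

section
/- Let (∂ : I → H, i) be a Hopf algebra projection over a field k with kernel generator maps f, g : I → I. Then the braided adjoint action coincides with the ordinary adjoint action: for all x, y ∈ I, Σ f(x') · (i(∂(x'')) ▷_ad y) · g(x''') = x ▷_ad y = Σ x' y S(x''). -/
open TensorProduct

/-!
Write `⋆` for the convolution product on `End I`, `S` for the antipode and `T = i ∘ ∂`, a
bialgebra endomorphism of `I`. With `c_y = y · ε`, the adjoint action is `(· ▷_ad y) = id ⋆ c_y ⋆ S`,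
and since `T` respects products and coproducts, `(· ▷_ad y) ∘ T = T ⋆ c_y ⋆ (S ∘ T)`,
`f = id ⋆ (T ∘ S)` and `g = T ⋆ S`. Both `T ∘ S` and `S ∘ T` are left convolution inverses of `T`,
so the braided action `f ⋆ ((· ▷_ad y) ∘ T) ⋆ g` collapses to `id ⋆ c_y ⋆ S`.
-/

open Coalgebra WithConv

section Convolution

variable {R C A : Type*} [CommSemiring R] [AddCommMonoid C] [Module R C] [Coalgebra R C]
  [Semiring A] [Algebra R A]

lemma mulLeft_comp_convMul (a : A) (f g : WithConv (C →ₗ[R] A)) :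
    toConv (LinearMap.mulLeft R a ∘ₗ (f * g).ofConv) =
      toConv (LinearMap.mulLeft R a ∘ₗ f.ofConv) * g := by
  ext c
  simp [(ℛ R c).convMul_apply, mul_assoc]

lemma toSpanSingleton_comp_counit_convMul (a : A) (f : WithConv (C →ₗ[R] A)) :
    toConv (LinearMap.toSpanSingleton R A a ∘ₗ counit) * f =
      toConv (LinearMap.mulLeft R a ∘ₗ f.ofConv) := by
  have : LinearMap.toSpanSingleton R A a ∘ₗ counit =
      LinearMap.mulLeft R a ∘ₗ (1 : WithConv (C →ₗ[R] A)).ofConv := by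
    ext c
    simp [Algebra.smul_def, Algebra.commutes]
  rw [this, ← mulLeft_comp_convMul, one_mul]

lemma toSpanSingleton_comp_counit_comp_coalgHom {B : Type*} [AddCommMonoid B] [Module R B]
    [Coalgebra R B] (a : A) (T : B →ₗc[R] C) :
    (LinearMap.toSpanSingleton R A a ∘ₗ counit) ∘ₗ T.toLinearMap =
      LinearMap.toSpanSingleton R A a ∘ₗ counit := by
  ext b
  simp

lemma convMul_convMul_apply (f g h : C →ₗ[R] A) (c : C) :
    (toConv f * toConv g * toConv h) c =
      LinearMap.mul' R A (TensorProduct.map (LinearMap.mul' R A) LinearMap.id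
        (TensorProduct.map (TensorProduct.map f g) h
          (TensorProduct.map comul LinearMap.id (comul c)))) := by
  rw [LinearMap.convMul_apply]
  induction comul (R := R) c using TensorProduct.induction_on with
  | zero => simp
  | tmul a b => simp
  | add u v hu hv => simp only [map_add, hu, hv]

end Convolution

section HopfAlgebra

variable {R A B : Type*} [CommSemiring R] [Semiring A] [HopfAlgebra R A]

lemma antipode_comp_convMul_self [AddCommMonoid B] [Module R B] [Coalgebra R B]
    (T : B →ₗc[R] A) :
    toConv (HopfAlgebra.antipode R ∘ₗ T.toLinearMap) * toConv T.toLinearMap = 1 := by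
  have h := LinearMap.convMul_comp_coalgHom_distrib
    (toConv (HopfAlgebra.antipode R)) (toConv LinearMap.id) T
  rw [LinearMap.antipode_mul_id] at h
  ext b
  simpa using congr($h b).symm

lemma comp_antipode_convMul_self [Semiring B] [Algebra R B] (T : A →ₐ[R] B) :
    toConv (T.toLinearMap ∘ₗ HopfAlgebra.antipode R) * toConv T.toLinearMap = 1 := by
  have h := LinearMap.algHom_comp_convMul_distrib T
    (toConv (HopfAlgebra.antipode R)) (toConv LinearMap.id)
  rw [LinearMap.antipode_mul_id] at h
  ext a
  simpa using congr($h a).symm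

lemma adT_comp_flip_mk (y : A) :
    adT R A ∘ₗ (TensorProduct.mk R A A).flip y =
      (toConv LinearMap.id * toConv (LinearMap.toSpanSingleton R A y ∘ₗ counit) *
        toConv (HopfAlgebra.antipode R)).ofConv := by
  ext x
  rw [mul_assoc, toSpanSingleton_comp_counit_convMul, (ℛ R x).convMul_apply]
  simp [adT, ← (ℛ R x).eq, TensorProduct.sum_tmul, map_sum]

lemma adT_comp_flip_mk_comp_coalgHom (y : A) (T : A →ₗc[R] A) :
    adT R A ∘ₗ (TensorProduct.mk R A A).flip y ∘ₗ T.toLinearMap =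
      (toConv T.toLinearMap * toConv (LinearMap.toSpanSingleton R A y ∘ₗ counit) *
        toConv (HopfAlgebra.antipode R ∘ₗ T.toLinearMap)).ofConv := by
  rw [← LinearMap.comp_assoc, adT_comp_flip_mk, LinearMap.convMul_comp_coalgHom_distrib,
    toConv_ofConv, LinearMap.convMul_comp_coalgHom_distrib]
  simp only [LinearMap.id_comp, toSpanSingleton_comp_counit_comp_coalgHom]

end HopfAlgebra

theorem braided_adjoint_eq_adjoint_general {k I H : Type*} [Field k] [Ring I] [Ring H]
    [HopfAlgebra k I] [HopfAlgebra k H]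
    (p : I →ₐc[k] H) (i : H →ₐc[k] I) (x y : I) :
    LinearMap.mul' k I
        (TensorProduct.map (LinearMap.mul' k I) LinearMap.id
          (TensorProduct.map
            (TensorProduct.map (fker p i)
              ((adT k I) ∘ₗ ((TensorProduct.mk k I I).flip y)
                ∘ₗ i.toLinearMap ∘ₗ p.toLinearMap))
            (gker p i)
            (TensorProduct.map (Coalgebra.comul (R := k)) LinearMap.id
              (Coalgebra.comul (R := k) x))))
      = adT k I (x ⊗ₜ[k] y) := by
  set T : I →ₐc[k] I := i.comp p
  set S : I →ₗ[k] I := HopfAlgebra.antipode k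
  have hTS : toConv (T.toLinearMap ∘ₗ S) * toConv T.toLinearMap = 1 :=
    comp_antipode_convMul_self (T : I →ₐ[k] I)
  have hST : toConv (S ∘ₗ T.toLinearMap) * toConv T.toLinearMap = 1 :=
    antipode_comp_convMul_self (T : I →ₗc[k] I)
  change _ = (adT k I ∘ₗ (TensorProduct.mk k I I).flip y) x
  rw [show i.toLinearMap ∘ₗ p.toLinearMap = (T : I →ₗc[k] I).toLinearMap from rfl,
    adT_comp_flip_mk_comp_coalgHom, ← convMul_convMul_apply, adT_comp_flip_mk]
  change (toConv LinearMap.id * toConv (T.toLinearMap ∘ₗ S) *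
    (toConv T.toLinearMap * _ * toConv (S ∘ₗ T.toLinearMap)) *
      (toConv T.toLinearMap * toConv S) : WithConv (I →ₗ[k] I)).ofConv x = _
  simp only [mul_assoc]
  rw [← mul_assoc (toConv (T.toLinearMap ∘ₗ S)), hTS, one_mul,
    ← mul_assoc (toConv (S ∘ₗ T.toLinearMap)), hST, one_mul]

/-- for a Hopf algebra projection `(∂ : I → H, i)`, the braided adjoint
action coincides with the ordinary adjoint action:
`Σ f(x') · (i(∂(x'')) ▷_ad y) · g(x''') = x ▷_ad y = Σ x' y S(x'')`. -/
theorem braided_adjoint_eq_adjoint {k I H : Type*} [Field k] [Ring I] [Ring H]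
    [HopfAlgebra k I] [HopfAlgebra k H]
    (p : I →ₐc[k] H) (i : H →ₐc[k] I) (hpi : ∀ x : H, p (i x) = x) (x y : I) :
    LinearMap.mul' k I
        (TensorProduct.map (LinearMap.mul' k I) LinearMap.id
          (TensorProduct.map
            (TensorProduct.map (fker p i)
              ((adT k I) ∘ₗ ((TensorProduct.mk k I I).flip y)
                ∘ₗ i.toLinearMap ∘ₗ p.toLinearMap))
            (gker p i)
            (TensorProduct.map (Coalgebra.comul (R := k)) LinearMap.id
              (Coalgebra.comul (R := k) x))))
      = adT k I (x ⊗ₜ[k] y) :=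
  braided_adjoint_eq_adjoint_general p i x y
end
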